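/- Let T = (V, L) be a locally finite tree, p a prime and q ≥ 2. For each directed edge (v,x) let Q_{(v,x)}(j,i) ∈ ℚ_p (j,i ∈ {1,…,q}) satisfy |Q_{(v,x)}(j,i)|_p ≤ 1 and |Q_{(v,x)}(j,i) − Q_{(v,x)}(j,q)|_p ≤ 1/p for all i,j. Suppose z assigns to each directed edge a vector (z_1, …, z_{q−1}) with all |z_i − 1|_p ≤ 1/p, satisfying for every directed edge (x,y) and every i: z_i(x,y) = ∏_{v ∈ ∂{x}∖{y}} [1 + Σ_{j=1}^{q−1}(z_j(v,x) − 1)Q_{(v,x)}(j,i)] / [1 + Σ_{j=1}^{q−1}(z_j(v,x) − 1)Q_{(v,x)}(j,q)]. If (x,y) is a directed edge with ∂{x}∖{y} nonempty, then max_{1≤i≤q−1} |z_i(x,y) − 1|_p ≤ (1/p) · max_{v ∈ ∂{x}∖{y}} max_{1≤j≤q−1} |z_j(v,x) − 1|_p. -/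

import Mathlib

/-! Each factor of the boundary-law product has the form `(1 + A) / (1 + B)` with `‖B‖ < 1`, so
in the ultrametric field `ℚ_[p]` its distance to `1` is `‖A - B‖`. Now `A - B` is a combination of
the `z_j(v,x) - 1` with coefficients `Q(j,i) - Q(j,q)` of norm at most `1/p`, which gives the factor
`1/p`, and a product of elements within distance `c ≤ 1` of `1` stays within distance `c` of `1`. -/

open Finset IsUltrametricDist

section UltrametricRing

variable {R ι : Type*} [SeminormedCommRing R] [IsUltrametricDist R]

lemma norm_sum_mul_le (s : Finset ι) (a b : ι → R) {c d : ℝ} (hc : 0 ≤ c) (hd : 0 ≤ d)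
    (ha : ∀ i ∈ s, ‖a i‖ ≤ c) (hb : ∀ i ∈ s, ‖b i‖ ≤ d) :
    ‖∑ i ∈ s, a i * b i‖ ≤ c * d :=
  norm_sum_le_of_forall_le_of_nonneg (mul_nonneg hc hd) fun i hi =>
    (norm_mul_le _ _).trans (mul_le_mul (ha i hi) (hb i hi) (norm_nonneg _) hc)

variable [NormOneClass R]

lemma norm_one_add_eq_one {b : R} (hb : ‖b‖ < 1) : ‖1 + b‖ = 1 := by
  rw [norm_add_eq_max_of_norm_ne_norm (by simpa using hb.ne'), norm_one, max_eq_left hb.le]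

lemma norm_prod_sub_one_le (s : Finset ι) (f : ι → R) {c : ℝ} (hc0 : 0 ≤ c) (hc1 : c ≤ 1)
    (h : ∀ i ∈ s, ‖f i - 1‖ ≤ c) : ‖∏ i ∈ s, f i - 1‖ ≤ c := by
  induction s using Finset.cons_induction with
  | empty => simpa using hc0
  | cons a s ha ih =>
    have hfa : ‖f a - 1‖ ≤ c := h a (mem_cons_self a s)
    have hprod : ‖∏ i ∈ s, f i - 1‖ ≤ c := ih fun i hi => h i (mem_cons_of_mem hi)
    have hfa_le_one : ‖f a‖ ≤ 1 := by
      simpa using (norm_add_one_le_max_norm_one (f a - 1)).trans (max_le (hfa.trans hc1) le_rfl)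
    have hsplit : f a * ∏ i ∈ s, f i - 1 = f a * (∏ i ∈ s, f i - 1) + (f a - 1) := by ring
    rw [prod_cons, hsplit]
    refine (norm_add_le_max _ _).trans (max_le ?_ hfa)
    calc ‖f a * (∏ i ∈ s, f i - 1)‖ ≤ 1 * c :=
          (norm_mul_le _ _).trans (mul_le_mul hfa_le_one hprod (norm_nonneg _) zero_le_one)
      _ = c := one_mul c

end UltrametricRing

section UltrametricField

variable {K ι : Type*} [NormedField K] [IsUltrametricDist K]

lemma norm_one_add_div_one_add_sub_one {a b : K} (hb : ‖b‖ < 1) :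
    ‖(1 + a) / (1 + b) - 1‖ = ‖a - b‖ := by
  have hnorm := norm_one_add_eq_one hb
  have hne : 1 + b ≠ 0 := norm_ne_zero_iff.mp (by simp [hnorm])
  rw [div_sub_one hne, norm_div, hnorm, div_one, add_sub_add_left_eq_sub]

lemma norm_one_add_sum_div_one_add_sum_sub_one_le (s : Finset ι) (w a b : ι → K) {m r : ℝ}
    (hm0 : 0 ≤ m) (hm1 : m < 1) (hr : 0 ≤ r) (hw : ∀ j ∈ s, ‖w j‖ ≤ m)
    (hb : ∀ j ∈ s, ‖b j‖ ≤ 1) (hab : ∀ j ∈ s, ‖a j - b j‖ ≤ r) :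
    ‖(1 + ∑ j ∈ s, w j * a j) / (1 + ∑ j ∈ s, w j * b j) - 1‖ ≤ m * r := by
  have hden : ‖∑ j ∈ s, w j * b j‖ < 1 :=
    (norm_sum_mul_le s w b hm0 zero_le_one hw hb).trans_lt (by simpa using hm1)
  rw [norm_one_add_div_one_add_sub_one hden, ← sum_sub_distrib]
  simp_rw [← mul_sub]
  exact norm_sum_mul_le s w _ hm0 hr hw hab

end UltrametricField

/-- The contraction estimate (4.8)/(4.9) in the proof of Theorem 4.2: on a locally finite
tree, with `q = n + 1 ≥ 2` spin values (the last index `Fin.last n` playing the role of `q`),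
if `|Q_{(v,x)}(j,i)|_p ≤ 1`, `|Q_{(v,x)}(j,i) − Q_{(v,x)}(j,q)|_p ≤ 1/p`, and `z` is a
boundary law with `|z_i(x,y) − 1|_p ≤ 1/p`, then for any directed edge `(x,y)` with
`∂{x}∖{y}` nonempty,
`max_i |z_i(x,y) − 1|_p ≤ (1/p) · max_{v ∈ ∂{x}∖{y}} max_j |z_j(v,x) − 1|_p`. -/
theorem padic_boundary_law_contraction
    {V : Type*} [DecidableEq V] (G : SimpleGraph V)
    [∀ v : V, Fintype (G.neighborSet v)]
    (hT : G.IsTree)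
    (p : ℕ) [Fact p.Prime] (n : ℕ) (hn : 1 ≤ n)
    (Q : V → V → Fin (n + 1) → Fin (n + 1) → ℚ_[p])
    (hQ1 : ∀ v x : V, G.Adj v x → ∀ j i, ‖Q v x j i‖ ≤ 1)
    (hQ2 : ∀ v x : V, G.Adj v x → ∀ j i,
      ‖Q v x j i - Q v x j (Fin.last n)‖ ≤ 1 / (p : ℝ))
    (z : V → V → Fin n → ℚ_[p])
    (hz : ∀ x y : V, G.Adj x y → ∀ i, ‖z x y i - 1‖ ≤ 1 / (p : ℝ))
    (hbl : ∀ x y : V, G.Adj x y → ∀ i : Fin n,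
      z x y i = ∏ v ∈ (G.neighborFinset x).erase y,
        (1 + ∑ j : Fin n, (z v x j - 1) * Q v x j.castSucc i.castSucc) /
        (1 + ∑ j : Fin n, (z v x j - 1) * Q v x j.castSucc (Fin.last n)))
    (x y : V) (hxy : G.Adj x y) (hne : ((G.neighborFinset x).erase y).Nonempty) :
    Finset.univ.sup' (Finset.univ_nonempty_iff.mpr ⟨⟨0, hn⟩⟩)
        (fun i : Fin n => ‖z x y i - 1‖) ≤
      (1 / (p : ℝ)) *
        ((G.neighborFinset x).erase y).sup' hne
          (fun v => Finset.univ.sup' (Finset.univ_nonempty_iff.mpr ⟨⟨0, hn⟩⟩)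
            (fun j : Fin n => ‖z v x j - 1‖)) := by
  have hp_pos : (0 : ℝ) < p := Nat.cast_pos.mpr (Fact.out : p.Prime).pos
  have hp : (1 / p : ℝ) < 1 := by
    rw [div_lt_one hp_pos]; exact_mod_cast (Fact.out : p.Prime).one_lt
  set S := (G.neighborFinset x).erase y
  set M := S.sup' hne fun v =>
    univ.sup' (univ_nonempty_iff.mpr ⟨⟨0, hn⟩⟩) fun j : Fin n => ‖z v x j - 1‖
  have hadj : ∀ v ∈ S, G.Adj v x := fun v hv =>
    ((G.mem_neighborFinset x v).mp (mem_of_mem_erase hv)).symm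
  have hzM : ∀ v ∈ S, ∀ j, ‖z v x j - 1‖ ≤ M := fun v hv j =>
    (le_sup' (fun j : Fin n => ‖z v x j - 1‖) (mem_univ j)).trans
      (le_sup' (fun v => univ.sup' _ fun j : Fin n => ‖z v x j - 1‖) hv)
  have hM0 : 0 ≤ M := (norm_nonneg _).trans (hzM _ hne.choose_spec ⟨0, hn⟩)
  have hM1 : M < 1 :=
    (sup'_le _ _ fun v hv => sup'_le _ _ fun j _ => hz v x (hadj v hv) j).trans_lt hp
  refine sup'_le _ _ fun i _ => ?_
  rw [hbl x y hxy i]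
  refine norm_prod_sub_one_le _ _ (by positivity) ?_ fun v hv => ?_
  · simpa using mul_le_mul hp.le hM1.le hM0 zero_le_one
  · rw [mul_comm]
    exact norm_one_add_sum_div_one_add_sum_sub_one_le _ _ _ _ hM0 hM1 (by positivity)
      (fun j _ => hzM v hv j) (fun j _ => hQ1 v x (hadj v hv) _ _)
      (fun j _ => hQ2 v x (hadj v hv) _ _)
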